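/- For all real μ > 0 and all real y, |1/(1 - μ(e^{iy}-1))|² ≤ 1/(1 + (4/π²)·μ(μ+1)·y²) whenever |y| ≤ π. -/

import Mathlib

open Complex in
theorem norm_one_sub_mul_exp_sub_one_sq (μ y : ℝ) :
    ‖1 - (μ : ℂ) * (exp (I * y) - 1)‖ ^ 2 = 1 + 2 * μ * (μ + 1) * (1 - Real.cos y) := by
  rw [mul_comm I, exp_mul_I, Complex.sq_norm, normSq_apply]
  simp only [sub_re, one_re, mul_re, ofReal_re, add_re, cos_ofReal_re, sin_ofReal_re, I_re,
    mul_zero, sin_ofReal_im, I_im, mul_one, sub_self, add_zero, ofReal_im, sub_im, add_im,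
    cos_ofReal_im, mul_im, zero_add, one_im, sub_zero, zero_mul, zero_sub, mul_neg, neg_mul, neg_neg]
  linear_combination μ ^ 2 * Real.sin_sq_add_cos_sq y

theorem mul_sq_le_mul_one_sub_cos {c y : ℝ} (hc : 0 ≤ c) (hy : |y| ≤ Real.pi) :
    4 / Real.pi ^ 2 * c * y ^ 2 ≤ 2 * c * (1 - Real.cos y) := by
  have hcos : Real.cos y ≤ 1 - 2 / Real.pi ^ 2 * y ^ 2 := Real.cos_le_one_sub_mul_cos_sq hy
  calc 4 / Real.pi ^ 2 * c * y ^ 2 = 2 * c * (2 / Real.pi ^ 2 * y ^ 2) := by ring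
    _ ≤ 2 * c * (1 - Real.cos y) := by gcongr; linarith

theorem stmt_8 (μ y : ℝ) (hμ : 0 < μ) (hy : |y| ≤ Real.pi) :
    ‖(1 / (1 - (μ : ℂ) * (Complex.exp (Complex.I * y) - 1)))‖ ^ 2
      ≤ 1 / (1 + 4 / Real.pi ^ 2 * (μ * (μ + 1)) * y ^ 2) := by
  have hc : 0 ≤ μ * (μ + 1) := by positivity
  rw [norm_div, div_pow, norm_one, one_pow, norm_one_sub_mul_exp_sub_one_sq]
  apply one_div_le_one_div_of_le (by positivity)
  linarith [mul_sq_le_mul_one_sub_cos hc hy]
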